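/- Let A = {a₁ < a₂ < ... < a_k} ⊂ ℕ with k ≥ 2. Every complete word on A (containing every permutation of the elements of A as a subsequence) contains a regular occurrence of every preferential arrangement of length k. -/

import Mathlib

/-- `p` is a preferential arrangement of length `k` in dense-ranking form:
a string of length `k` whose positive entries form an initial segment of ℕ≥1. -/
def IsPrefArrangement (k : ℕ) (p : List ℕ) : Prop :=
  p.length = k ∧ (∀ x ∈ p, 1 ≤ x) ∧ (∀ x ∈ p, ∀ y, 1 ≤ y → y ≤ x → y ∈ p)

/-- A regular occurrence of the preferential arrangement `p` in the word `w` over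
the ordered alphabet `a 1 < a 2 < ... < a k`: an order-isomorphic occurrence of `p`
as a subsequence such that each letter `c` of `p`, having `i` letters of `p` below
it and `j` copies in `p`, is represented by some element of `{a (i+1), ..., a (i+j)}`. -/
def RegularOcc (a : ℕ → ℕ) (p w : List ℕ) : Prop :=
  ∃ v : List ℕ, v.Sublist w ∧ ∃ h : p.length = v.length,
    (∀ i j : Fin p.length,
      p.get i < p.get j ↔ v.get (Fin.cast h i) < v.get (Fin.cast h j)) ∧
    ∀ m : Fin p.length, ∃ t : ℕ,
      (p.filter fun x => x < p.get m).length < t ∧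
      t ≤ (p.filter fun x => x < p.get m).length + p.count (p.get m) ∧
      v.get (Fin.cast h m) = a t

/-! Reserve for each letter `c` of `p` the block of `count c` consecutive alphabet letters
that a regular occurrence may use for it. The blocks are increasing in `c`, so it suffices to
find a map `g` sending each letter into its block with `p.map g` a subsequence of `w`.
Build `g` from the left: for the first letter `c`, let `x` be the element of its block whose
first occurrence in `w` is latest. The part of `w` after that occurrence is complete for the
alphabet without `x`, so by induction it contains the image of the rest of `p`, the remaining
copies of `c` (if any) going to a block element other than `x`; that element occurs in `w`
no later than `x`, hence can also serve for the first copy of `c`. -/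

theorem List.Sublist.sublist_drop_idxOf_succ {α : Type*} [DecidableEq α] {x : α}
    {l w : List α} (h : (x :: l).Sublist w) : l.Sublist (w.drop (w.idxOf x + 1)) := by
  obtain ⟨r₁, r₂, rfl, hx, hl⟩ := List.cons_sublist_iff.1 h
  have hidx : (r₁ ++ r₂).idxOf x + 1 ≤ r₁.length := by
    rw [List.idxOf_append_of_mem hx]
    exact List.idxOf_lt_length_of_mem hx
  have hdrop := List.drop_sublist_drop_left (r₁ ++ r₂) hidx
  rw [List.drop_left] at hdrop
  exact hl.trans hdrop

theorem List.cons_sublist_of_idxOf_lt {α : Type*} [DecidableEq α] {r : α} {l w : List α}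
    {m : ℕ} (hr : r ∈ w) (hlt : w.idxOf r < m) (hl : l.Sublist (w.drop m)) :
    (r :: l).Sublist w := by
  have hr' : r ∈ w.take m := (List.mem_take_iff_idxOf_lt hr).2 hlt
  simpa using (List.singleton_sublist.2 hr').append hl

def IsCompleteWord {α : Type*} [DecidableEq α] (A : Finset α) (w : List α) : Prop :=
  ∀ l : List α, l.Nodup → l.toFinset = A → l.Sublist w

namespace IsCompleteWord

variable {α : Type*} [DecidableEq α] {A : Finset α} {w : List α}

theorem mem (hw : IsCompleteWord A w) {x : α} (hx : x ∈ A) : x ∈ w :=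
  (hw A.toList A.nodup_toList A.toList_toFinset).subset (Finset.mem_toList.2 hx)

theorem erase_drop_idxOf (hw : IsCompleteWord A w) {x : α} (hx : x ∈ A) :
    IsCompleteWord (A.erase x) (w.drop (w.idxOf x + 1)) := by
  intro l hl hlA
  have hxl : x ∉ l := by simp [← List.mem_toFinset, hlA]
  refine List.Sublist.sublist_drop_idxOf_succ (hw (x :: l) (hl.cons hxl) ?_)
  rw [List.toFinset_cons, hlA, Finset.insert_erase hx]

theorem exists_map_sublist [Nonempty α] {β : Type*} [DecidableEq β] (p : List β)
    (hw : IsCompleteWord A w) (B : β → Finset α) (hcount : ∀ c ∈ p, p.count c ≤ (B c).card)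
    (hdisj : {c | c ∈ p}.PairwiseDisjoint B) (hBA : ∀ c ∈ p, B c ⊆ A) :
    ∃ g : β → α, (∀ c ∈ p, g c ∈ B c) ∧ (p.map g).Sublist w := by
  induction p generalizing A w B with
  | nil => exact ⟨fun _ => Classical.arbitrary α, by simp, by simp⟩
  | cons c p ih =>
    have hc : c ∈ c :: p := List.mem_cons_self
    have hcB : (B c).Nonempty :=
      Finset.card_pos.1 (lt_of_lt_of_le (List.count_pos_iff.2 hc) (hcount c hc))
    obtain ⟨x, hxB, hx_last⟩ := (B c).exists_max_image w.idxOf hcB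
    have hxA : x ∈ A := hBA c hc hxB
    have hx_notMem : ∀ d ∈ p, d ≠ c → x ∉ B d := fun d hd hdc hxd =>
      Finset.disjoint_left.1 (hdisj hc (List.mem_cons_of_mem c hd) (Ne.symm hdc)) hxB hxd
    have hcount' : ∀ d ∈ p, p.count d ≤ ((B d).erase x).card := fun d hd => by
      by_cases hdc : d = c
      · subst hdc
        have := hcount d hc
        rw [List.count_cons_self] at this
        rw [Finset.card_erase_of_mem hxB]
        omega
      · rw [Finset.erase_eq_of_notMem (hx_notMem d hd hdc)]
        simpa [List.count_cons_of_ne (Ne.symm hdc)] using hcount d (List.mem_cons_of_mem c hd)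
    have hdisj' : {d | d ∈ p}.PairwiseDisjoint fun d => (B d).erase x :=
      (hdisj.subset fun d hd => List.mem_cons_of_mem c hd).mono_on
        fun d _ => Finset.erase_subset x (B d)
    obtain ⟨g, hgB, hgw⟩ := ih (hw.erase_drop_idxOf hxA) (fun d => (B d).erase x) hcount' hdisj'
      (fun d hd => Finset.erase_subset_erase x (hBA d (List.mem_cons_of_mem c hd)))
    by_cases hcp : c ∈ p
    · have hgc : g c ∈ B c := Finset.mem_of_mem_erase (hgB c hcp)
      refine ⟨g, fun d hd => ?_, ?_⟩
      · rcases List.mem_cons.1 hd with rfl | hd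
        · exact hgc
        · exact Finset.mem_of_mem_erase (hgB d hd)
      · exact List.cons_sublist_of_idxOf_lt (hw.mem (hBA c hc hgc))
          (Nat.lt_succ_of_le (hx_last _ hgc)) hgw
    · refine ⟨Function.update g c x, fun d hd => ?_, ?_⟩
      · rcases List.mem_cons.1 hd with rfl | hd
        · simpa using hxB
        · rw [Function.update_of_ne (ne_of_mem_of_not_mem hd hcp)]
          exact Finset.mem_of_mem_erase (hgB d hd)
      · have hmap : p.map (Function.update g c x) = p.map g :=
          List.map_congr_left fun d hd => Function.update_of_ne (ne_of_mem_of_not_mem hd hcp) _ _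
        rw [List.map_cons, Function.update_self, hmap]
        exact List.cons_sublist_of_idxOf_lt (hw.mem hxA) (Nat.lt_succ_self _) hgw

end IsCompleteWord

theorem isCompleteWord_image_of_forall_perm {α : Type*} [DecidableEq α] {k : ℕ} {f : Fin k → α}
    (hf : Function.Injective f) {w : List α}
    (h : ∀ σ : Equiv.Perm (Fin k), (List.ofFn fun i => f (σ i)).Sublist w) :
    IsCompleteWord (Finset.univ.image f) w := by
  intro l hl hlf
  obtain rfl : l.length = k := by
    rw [← List.toFinset_card_of_nodup hl, hlf, Finset.card_image_of_injective _ hf,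
      Finset.card_fin]
  have hmem : ∀ i : Fin l.length, ∃ j, f j = l[i] := fun i => by
    have hi : l[i] ∈ Finset.univ.image f := hlf ▸ List.mem_toFinset.2 (List.getElem_mem i.2)
    simpa using hi
  choose σ hσ using hmem
  have hσ_inj : Function.Injective σ := fun i j hij =>
    Fin.ext (hl.getElem_inj_iff.1 ((hσ i).symm.trans ((congrArg f hij).trans (hσ j))))
  have hl_eq : (List.ofFn fun i => f (σ i)) = l := by
    simp only [hσ]
    exact List.ofFn_getElem
  exact hl_eq ▸ h (Equiv.ofBijective σ (Finite.injective_iff_bijective.1 hσ_inj))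

section LetterBlock

open Function

variable {β γ : Type*} [LinearOrder β] [LinearOrder γ]

theorem List.length_filter_lt_add_count (l : List β) (c : β) :
    (l.filter (· < c)).length + l.count c = (l.filter (· ≤ c)).length := by
  induction l with
  | nil => rfl
  | cons b l ih =>
    rcases lt_trichotomy b c with h | rfl | h
    · simp [h, h.le, h.ne]
      omega
    · simp
      omega
    · simp [h.not_gt, h.not_ge, h.ne', ih]

theorem List.length_filter_lt_add_count_le_length (l : List β) (c : β) :
    (l.filter (· < c)).length + l.count c ≤ l.length :=
  l.length_filter_lt_add_count c ▸ List.length_filter_le _ _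

theorem List.length_filter_lt_add_count_le_of_lt (l : List β) {c d : β} (h : c < d) :
    (l.filter (· < c)).length + l.count c ≤ (l.filter (· < d)).length := by
  rw [l.length_filter_lt_add_count c, ← List.countP_eq_length_filter,
    ← List.countP_eq_length_filter]
  exact List.countP_mono_left fun x _ hx => by simpa using lt_of_le_of_lt (by simpa using hx) h

def letterBlock (a : ℕ → γ) (p : List β) (c : β) : Finset γ :=
  (Finset.Ioc (p.filter (· < c)).length ((p.filter (· < c)).length + p.count c)).image a

variable {a : ℕ → γ} {p : List β}

theorem letterBlock_subset_image (c : β) :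
    letterBlock a p c ⊆ Finset.univ.image fun i : Fin p.length => a (i + 1) := by
  intro y hy
  obtain ⟨t, ht, rfl⟩ := Finset.mem_image.1 hy
  rw [Finset.mem_Ioc] at ht
  have := p.length_filter_lt_add_count_le_length c
  exact Finset.mem_image.2 ⟨⟨t - 1, by omega⟩, Finset.mem_univ _, by congr 1; simp; omega⟩

theorem card_letterBlock (ha : StrictMonoOn a (Set.Icc 1 p.length)) (c : β) :
    (letterBlock a p c).card = p.count c := by
  rw [letterBlock, Finset.card_image_of_injOn, Nat.card_Ioc, Nat.add_sub_cancel_left]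
  refine ha.injOn.mono fun t ht => ?_
  have := p.length_filter_lt_add_count_le_length c
  simp only [Finset.coe_Ioc, Set.mem_Ioc] at ht
  exact ⟨by omega, by omega⟩

theorem lt_of_mem_letterBlock (ha : StrictMonoOn a (Set.Icc 1 p.length)) {c d : β} (hcd : c < d)
    {y z : γ} (hy : y ∈ letterBlock a p c) (hz : z ∈ letterBlock a p d) : y < z := by
  obtain ⟨s, hs, rfl⟩ := Finset.mem_image.1 hy
  obtain ⟨t, ht, rfl⟩ := Finset.mem_image.1 hz
  rw [Finset.mem_Ioc] at hs ht
  have := p.length_filter_lt_add_count_le_of_lt hcd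
  have := p.length_filter_lt_add_count_le_length d
  exact ha ⟨by omega, by omega⟩ ⟨by omega, by omega⟩ (by omega)

theorem pairwise_disjoint_letterBlock (ha : StrictMonoOn a (Set.Icc 1 p.length)) :
    Pairwise (Disjoint on letterBlock a p) := by
  intro c d hcd
  rcases hcd.lt_or_gt with h | h
  · exact Finset.disjoint_left.2 fun y hc hd => lt_irrefl y (lt_of_mem_letterBlock ha h hc hd)
  · exact Finset.disjoint_left.2 fun y hc hd => lt_irrefl y (lt_of_mem_letterBlock ha h hd hc)

end LetterBlock

theorem regularOcc_of_map_sublist {a : ℕ → ℕ} {p w : List ℕ} {g : ℕ → ℕ}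
    (hsub : (p.map g).Sublist w) (hmono : StrictMonoOn g {c | c ∈ p})
    (hblock : ∀ c ∈ p, g c ∈ letterBlock a p c) : RegularOcc a p w := by
  refine ⟨p.map g, hsub, (List.length_map g).symm, fun i j => ?_, fun m => ?_⟩
  · simp only [List.get_eq_getElem, Fin.val_cast, List.getElem_map]
    exact (hmono.lt_iff_lt (List.getElem_mem _) (List.getElem_mem _)).symm
  · obtain ⟨t, ht, hgt⟩ := Finset.mem_image.1 (hblock _ (List.get_mem p m))
    rw [Finset.mem_Ioc] at ht
    exact ⟨t, ht.1, ht.2, by simp [hgt]⟩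

theorem complete_word_has_regular_occurrences_general (k : ℕ) (a : ℕ → ℕ)
    (ha : ∀ i j, 1 ≤ i → i < j → j ≤ k → a i < a j)
    (w : List ℕ)
    (hcomplete : ∀ σ : Equiv.Perm (Fin k),
      (List.ofFn fun i => a ((σ i : ℕ) + 1)).Sublist w)
    (p : List ℕ) (hp : IsPrefArrangement k p) :
    RegularOcc a p w := by
  obtain ⟨rfl, -, -⟩ := hp
  have ha' : StrictMonoOn a (Set.Icc 1 p.length) := fun i hi j hj hij => ha i j hi.1 hij hj.2
  have hw : IsCompleteWord (Finset.univ.image fun i : Fin p.length => a (i + 1)) w :=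
    isCompleteWord_image_of_forall_perm (fun i j hij => Fin.ext (by
      have := ha'.injOn ⟨Nat.le_add_left 1 i, i.2⟩ ⟨Nat.le_add_left 1 j, j.2⟩ hij
      omega)) hcomplete
  obtain ⟨g, hgB, hgw⟩ := hw.exists_map_sublist p (letterBlock a p)
    (fun c _ => (card_letterBlock ha' c).ge) ((pairwise_disjoint_letterBlock ha').set_pairwise _)
    (fun c _ => letterBlock_subset_image c)
  exact regularOcc_of_map_sublist hgw
    (fun c hc d hd hcd => lt_of_mem_letterBlock ha' hcd (hgB c hc) (hgB d hd)) hgB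

/-- Every complete word on `A = {a 1 < ... < a k}` (k ≥ 2) contains a regular
occurrence of every preferential arrangement of length k. -/
theorem complete_word_has_regular_occurrences (k : ℕ) (hk : 2 ≤ k) (a : ℕ → ℕ)
    (ha : ∀ i j, 1 ≤ i → i < j → j ≤ k → a i < a j)
    (w : List ℕ) (halph : ∀ x ∈ w, ∃ t, 1 ≤ t ∧ t ≤ k ∧ x = a t)
    (hcomplete : ∀ σ : Equiv.Perm (Fin k),
      (List.ofFn fun i => a ((σ i : ℕ) + 1)).Sublist w)
    (p : List ℕ) (hp : IsPrefArrangement k p) :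
    RegularOcc a p w :=
  complete_word_has_regular_occurrences_general k a ha w hcomplete p hp
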